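/- Let W be a symmetric n×n real matrix with n ≥ 2, and for t ∈ ℝ let K^df(t) = ∑_{k=0}^∞ (t^k/k!!)·W^k denote the double-factorial similarity matrix (the series converges for every t). Then there exists t₀ > 0 such that for all t with 0 < t < t₀, the matrix K^df(t) is positive definite and is a proximity on {1,…,n}: K^df(t)_xy + K^df(t)_xz − K^df(t)_yz ≤ K^df(t)_xx for all x, y, z, with strict inequality whenever z = y and y ≠ x. -/

import Mathlib

/-!
Writing `K(t) = ∑ₖ (tᵏ / k‼) • Wᵏ`, the even terms `(t²/2)ᵏ/k! • W²ᵏ` form an exponential series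
and the odd terms are dominated by them, so the series converges for every `t`; by dominated
convergence `K(t) → 1` as `t → 0`. Every symmetric matrix whose entries are within
`δ = 1 / (4 (n + 1))` of those of the identity is positive definite (the perturbation of the
quadratic form is at most `n δ ‖x‖²`) and a proximity (each off-diagonal entry is at most `δ`,
each diagonal entry at least `1 - δ`).
-/

open scoped Nat Matrix
open Filter Topology

theorem Nat.doubleFactorial_le_doubleFactorial_succ : ∀ n : ℕ, n‼ ≤ (n + 1)‼
  | 0 => le_rfl
  | 1 => by decide
  | n + 2 => by
    rw [doubleFactorial_add_two, show n + 2 + 1 = n + 1 + 2 by rfl, doubleFactorial_add_two]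
    exact Nat.mul_le_mul (by omega) (doubleFactorial_le_doubleFactorial_succ _)

theorem Real.summable_pow_div_doubleFactorial (r : ℝ) :
    Summable fun k : ℕ => r ^ k / (k‼ : ℝ) := by
  have h_even (k : ℕ) : r ^ (2 * k) / ((2 * k)‼ : ℝ) = (r ^ 2 / 2) ^ k / k ! := by
    rw [Nat.doubleFactorial_two_mul]
    push_cast
    rw [pow_mul, div_pow, div_div]
  have h_exp := Real.summable_pow_div_factorial (r ^ 2 / 2)
  refine Summable.even_add_odd ?_ ?_
  · simpa only [h_even] using h_exp
  · refine Summable.of_norm_bounded (h_exp.mul_left |r|) fun k => ?_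
    calc ‖r ^ (2 * k + 1) / ((2 * k + 1)‼ : ℝ)‖
        = |r| * (r ^ (2 * k) / ((2 * k + 1)‼ : ℝ)) := by
          rw [Real.norm_eq_abs, abs_div, abs_pow, Nat.abs_cast, pow_succ', pow_mul, pow_mul,
            sq_abs, mul_div_assoc]
      _ ≤ |r| * (r ^ (2 * k) / ((2 * k)‼ : ℝ)) := by
          gcongr
          · exact (even_two_mul k).pow_nonneg r
          · exact_mod_cast Nat.doubleFactorial_le_doubleFactorial_succ _
      _ = |r| * ((r ^ 2 / 2) ^ k / k !) := by rw [h_even]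

section NormedAlgebra

variable {A : Type*} [NormedRing A]

theorem summable_norm_pow_div_doubleFactorial (a : A) :
    Summable fun k : ℕ => ‖a ^ k‖ / (k‼ : ℝ) := by
  rw [← summable_nat_add_iff 1]
  refine ((summable_nat_add_iff 1).mpr (Real.summable_pow_div_doubleFactorial ‖a‖)).of_nonneg_of_le
    (fun k => by positivity) fun k => ?_
  gcongr
  exact norm_pow_le' a k.succ_pos

variable [NormedAlgebra ℝ A]

theorem norm_smul_pow_div_doubleFactorial (t : ℝ) (a : A) (k : ℕ) :
    ‖(t ^ k / (k‼ : ℝ)) • a ^ k‖ = |t| ^ k * (‖a ^ k‖ / k‼) := by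
  rw [norm_smul, norm_div, norm_pow, Real.norm_eq_abs, Real.norm_natCast]
  ring

variable [CompleteSpace A]

theorem summable_smul_pow_div_doubleFactorial (t : ℝ) (a : A) :
    Summable fun k : ℕ => (t ^ k / (k‼ : ℝ)) • a ^ k := by
  refine Summable.of_norm ((summable_norm_pow_div_doubleFactorial (|t| • a)).congr fun k => ?_)
  rw [norm_smul_pow_div_doubleFactorial, smul_pow, norm_smul, norm_pow, Real.norm_eq_abs, abs_abs,
    mul_div_assoc]

theorem tendsto_tsum_smul_pow_div_doubleFactorial_zero (a : A) :
    Tendsto (fun t : ℝ => ∑' k : ℕ, (t ^ k / (k‼ : ℝ)) • a ^ k) (𝓝 0) (𝓝 1) := by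
  have h_zero : ∑' k : ℕ, ((0 : ℝ) ^ k / (k‼ : ℝ)) • a ^ k = 1 := by
    rw [tsum_eq_single 0 fun k hk => by simp [hk]]
    simp
  rw [← h_zero]
  refine tendsto_tsum_of_dominated_convergence (summable_norm_pow_div_doubleFactorial a)
    (fun k => (((continuous_pow k).div_const _).smul continuous_const).tendsto 0) ?_
  filter_upwards [Metric.closedBall_mem_nhds (0 : ℝ) one_pos] with t ht k
  have ht : |t| ≤ 1 := by simpa using ht
  rw [norm_smul_pow_div_doubleFactorial]
  exact mul_le_of_le_one_left (by positivity) (pow_le_one₀ (abs_nonneg t) ht)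

end NormedAlgebra

def IsProximity {α : Type*} (κ : α → α → ℝ) : Prop :=
  (∀ x y z, κ x y + κ x z - κ y z ≤ κ x x) ∧ ∀ x y, y ≠ x → κ x y + κ x y - κ y y < κ x x

namespace Matrix

variable {ι : Type*}

theorem isProximity_of_abs_sub_one_le [DecidableEq ι] {K : Matrix ι ι ℝ} (hK : K.IsSymm)
    {δ : ℝ} (hδ : δ ≤ 1 / 4) (h : ∀ i j, |(K - 1) i j| ≤ δ) : IsProximity K := by
  have h_diag (i : ι) : 1 - δ ≤ K i i := by
    have := (abs_le.mp (h i i)).1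
    rw [sub_apply, one_apply_eq] at this
    linarith
  have h_off {i j : ι} (hij : i ≠ j) : K i j ≤ δ := by
    simpa [hij] using (abs_le.mp (h i j)).2
  have h_lower (i j : ι) : -δ ≤ K i j := by
    have := (abs_le.mp (h i j)).1
    rw [sub_apply, one_apply] at this
    split_ifs at this <;> linarith
  refine ⟨fun x y z => ?_, fun x y hyx => ?_⟩
  · rcases eq_or_ne y x with rfl | hyx
    · simp
    rcases eq_or_ne z x with rfl | hzx
    · linarith [hK.apply y z]
    linarith [h_off hyx.symm, h_off hzx.symm, h_lower y z, h_diag x]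
  · linarith [h_off hyx.symm, h_diag x, h_diag y]

variable [Fintype ι]

theorem abs_dotProduct_mulVec_le {E : Matrix ι ι ℝ} {δ : ℝ} (hE : ∀ i j, |E i j| ≤ δ)
    (x : ι → ℝ) : |x ⬝ᵥ E *ᵥ x| ≤ Fintype.card ι * δ * (x ⬝ᵥ x) := by
  calc |x ⬝ᵥ E *ᵥ x| = |∑ i, ∑ j, x i * E i j * x j| := by
        simp only [dotProduct, mulVec, Finset.mul_sum, mul_assoc]
    _ ≤ ∑ i, ∑ j, |x i| * δ * |x j| := by
        refine (Finset.abs_sum_le_sum_abs _ _).trans (Finset.sum_le_sum fun i _ => ?_)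
        refine (Finset.abs_sum_le_sum_abs _ _).trans (Finset.sum_le_sum fun j _ => ?_)
        rw [abs_mul, abs_mul]
        gcongr
        exact hE i j
    _ = δ * (∑ i, |x i|) ^ 2 := by
        simp only [sq, Finset.mul_sum, Finset.sum_mul]
        exact Finset.sum_congr rfl fun i _ => Finset.sum_congr rfl fun j _ => by ring
    _ ≤ δ * (Fintype.card ι * ∑ i, |x i| ^ 2) := by
        rcases isEmpty_or_nonempty ι with _ | ⟨⟨i⟩⟩
        · simp
        exact mul_le_mul_of_nonneg_left sq_sum_le_card_mul_sum_sq ((abs_nonneg _).trans (hE i i))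
    _ = Fintype.card ι * δ * (x ⬝ᵥ x) := by
        simp only [dotProduct, ← sq, sq_abs]
        ring

variable [DecidableEq ι]

theorem posDef_of_abs_sub_one_le {K : Matrix ι ι ℝ} (hK : K.IsSymm) {δ : ℝ}
    (hδ : Fintype.card ι * δ < 1) (h : ∀ i j, |(K - 1) i j| ≤ δ) : K.PosDef := by
  refine .of_dotProduct_mulVec_pos hK fun x hx => ?_
  have hx : 0 < x ⬝ᵥ x := dotProduct_star_self_pos_iff.mpr hx
  have h_err := (abs_le.mp (abs_dotProduct_mulVec_le h x)).1
  rw [sub_mulVec, dotProduct_sub, one_mulVec] at h_err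
  simp only [star_trivial]
  nlinarith

theorem eventually_nhds_one_posDef_and_isProximity :
    ∀ᶠ K : Matrix ι ι ℝ in 𝓝 1, K.IsSymm → K.PosDef ∧ IsProximity K := by
  set δ : ℝ := 1 / (4 * (Fintype.card ι + 1))
  have hδ : 0 < δ := by positivity
  have h_entries : ∀ᶠ K : Matrix ι ι ℝ in 𝓝 1, ∀ i j, |(K - 1) i j| ≤ δ := by
    refine eventually_all.mpr fun i => eventually_all.mpr fun j => ?_
    have h_cont : Continuous fun K : Matrix ι ι ℝ => (K - 1) i j := by fun_prop
    filter_upwards [h_cont.tendsto' 1 0 (by simp) (Metric.closedBall_mem_nhds 0 hδ)] with K hK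
    simpa using hK
  filter_upwards [h_entries] with K hK hsymm
  refine ⟨posDef_of_abs_sub_one_le hsymm ?_ hK, isProximity_of_abs_sub_one_le hsymm ?_ hK⟩
  · rw [mul_one_div, div_lt_one (by positivity)]
    linarith
  · exact one_div_le_one_div_of_le (by norm_num) (by linarith)

end Matrix

theorem double_factorial_similarity_small_t_general {n : ℕ}
    (W : Matrix (Fin n) (Fin n) ℝ) (hW_symm : W.IsSymm)
    (Kdf : ℝ → Matrix (Fin n) (Fin n) ℝ)
    (hKdf : ∀ t : ℝ, Kdf t = ∑' k : ℕ, (t ^ k / (k‼ : ℝ)) • W ^ k) :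
    (∀ t : ℝ, Summable fun k : ℕ => (t ^ k / (k‼ : ℝ)) • W ^ k) ∧
    ∃ t₀ : ℝ, 0 < t₀ ∧ ∀ t : ℝ, 0 < t → t < t₀ →
      (Kdf t).PosDef ∧
      (∀ x y z : Fin n, Kdf t x y + Kdf t x z - Kdf t y z ≤ Kdf t x x) ∧
      (∀ x y : Fin n, y ≠ x → Kdf t x y + Kdf t x y - Kdf t y y < Kdf t x x) := by
  -- Any submultiplicative norm will do; this one induces the entrywise topology.
  let _ : NormedRing (Matrix (Fin n) (Fin n) ℝ) := Matrix.linftyOpNormedRing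
  let _ : NormedAlgebra ℝ (Matrix (Fin n) (Fin n) ℝ) := Matrix.linftyOpNormedAlgebra
  have h_symm (t : ℝ) : (Kdf t).IsSymm := by
    rw [hKdf, Matrix.IsSymm, Matrix.transpose_tsum]
    simp only [Matrix.transpose_smul, Matrix.transpose_pow, hW_symm.eq]
  have h_tendsto : Tendsto Kdf (𝓝 0) (𝓝 1) := by
    rw [funext hKdf]
    exact tendsto_tsum_smul_pow_div_doubleFactorial_zero W
  obtain ⟨t₀, ht₀, h_small⟩ := Metric.eventually_nhds_iff.mp
    (h_tendsto.eventually Matrix.eventually_nhds_one_posDef_and_isProximity)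
  refine ⟨fun t => summable_smul_pow_div_doubleFactorial t W, t₀, ht₀, fun t ht ht' => ?_⟩
  exact h_small (by rwa [Real.dist_0_eq_abs, abs_of_pos ht]) (h_symm t)

open scoped Nat in
/-- Let `W` be a symmetric `n × n` real matrix, `n ≥ 2`, and for `t ∈ ℝ`
let `K^df(t) = ∑_{k=0}^∞ (t^k / k‼) • W^k` be the double-factorial similarity matrix (the
series converges for every `t`).  Then there exists `t₀ > 0` such that for all `0 < t < t₀`
the matrix `K^df(t)` is positive definite and a proximity on `{1,…,n}`. -/
theorem double_factorial_similarity_small_t {n : ℕ} (hn : 2 ≤ n)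
    (W : Matrix (Fin n) (Fin n) ℝ) (hW_symm : W.IsSymm)
    (Kdf : ℝ → Matrix (Fin n) (Fin n) ℝ)
    (hKdf : ∀ t : ℝ, Kdf t = ∑' k : ℕ, (t ^ k / (k‼ : ℝ)) • W ^ k) :
    (∀ t : ℝ, Summable fun k : ℕ => (t ^ k / (k‼ : ℝ)) • W ^ k) ∧
    ∃ t₀ : ℝ, 0 < t₀ ∧ ∀ t : ℝ, 0 < t → t < t₀ →
      (Kdf t).PosDef ∧
      (∀ x y z : Fin n, Kdf t x y + Kdf t x z - Kdf t y z ≤ Kdf t x x) ∧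
      (∀ x y : Fin n, y ≠ x → Kdf t x y + Kdf t x y - Kdf t y y < Kdf t x x) :=
  double_factorial_similarity_small_t_general W hW_symm Kdf hKdf
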